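/- Let K, K̂ ∈ R^{m×m} be symmetric, with eigenvalues λ₁ ≥ ... ≥ λ_m of K. Let V, V̂ ∈ R^{m×r} be matrices of top-r orthonormal eigenvectors of K and K̂ respectively. Then ||VVᵀ − V̂V̂ᵀ||_F ≤ 2√2 ||K − K̂||_F / (λ_r − λ_{r+1}), assuming λ_r > λ_{r+1}. -/

import Mathlib

/-!
Let `P`, `P̂` be the projections onto the top-`r` eigenspaces and `δ = λ_r - λ_{r+1}`. For a
symmetric idempotent `Q` of trace `r`, the diagonal of `Q` in an eigenbasis of `K` is a weight
vector in `[0,1]^m` of total mass `r`; moving mass below the gap costs at least `δ` per unit, so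
`tr (K (P - Q)) ≥ δ (r - tr (P Q)) = δ/2 ‖P - Q‖_F²`. Applying this to `(K, P̂)` and to `(K̂, P)`
(where a nonnegative gap suffices) and adding gives
`δ/2 ‖P - P̂‖_F² ≤ tr ((K - K̂)(P - P̂)) ≤ ‖K - K̂‖_F ‖P - P̂‖_F`,
so `‖P - P̂‖_F ≤ 2 ‖K - K̂‖_F / δ`.
-/

open Matrix

noncomputable def frobNorm {m n : ℕ} (A : Matrix (Fin m) (Fin n) ℝ) : ℝ :=
  Real.sqrt (Matrix.trace (Aᵀ * A))

open Finset

section Projections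

variable {ι κ : Type*}

lemma diag_mem_Icc_of_isIdempotentElem [Fintype ι] {Q : Matrix ι ι ℝ} (hQs : Q.IsSymm)
    (hQ : IsIdempotentElem Q) (i : ι) : 0 ≤ Q i i ∧ Q i i ≤ 1 := by
  have hsq : Q i i = ∑ k, Q i k ^ 2 := by
    conv_lhs => rw [← hQ.eq]
    simp only [mul_apply, sq, hQs.apply]
  have h0 : 0 ≤ Q i i := hsq ▸ sum_nonneg fun k _ => sq_nonneg (Q i k)
  have hle : Q i i ^ 2 ≤ Q i i :=
    hsq ▸ single_le_sum (f := fun k => Q i k ^ 2) (fun k _ => sq_nonneg _) (mem_univ i)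
  exact ⟨h0, by nlinarith⟩

lemma isSymm_transpose_mul_mul [Fintype ι] {Q : Matrix ι ι ℝ} (hQ : Q.IsSymm)
    (U : Matrix ι ι ℝ) : (Uᵀ * Q * U).IsSymm := by
  simp only [IsSymm, transpose_mul, transpose_transpose, hQ.eq, Matrix.mul_assoc]

lemma isIdempotentElem_transpose_mul_mul [Fintype ι] [DecidableEq ι] {Q U : Matrix ι ι ℝ}
    (hQ : IsIdempotentElem Q) (hU : U * Uᵀ = 1) : IsIdempotentElem (Uᵀ * Q * U) := by
  calc Uᵀ * Q * U * (Uᵀ * Q * U) = Uᵀ * (Q * (U * Uᵀ) * Q) * U := by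
        simp only [Matrix.mul_assoc]
    _ = Uᵀ * Q * U := by rw [hU, Matrix.mul_one, hQ.eq, Matrix.mul_assoc]

lemma isSymm_mul_transpose [Fintype κ] (V : Matrix ι κ ℝ) : (V * Vᵀ).IsSymm := by
  simp only [IsSymm, transpose_mul, transpose_transpose]

lemma isIdempotentElem_mul_transpose [Fintype ι] [Fintype κ] [DecidableEq κ]
    {V : Matrix ι κ ℝ} (hV : Vᵀ * V = 1) : IsIdempotentElem (V * Vᵀ) := by
  rw [IsIdempotentElem, Matrix.mul_assoc, ← Matrix.mul_assoc Vᵀ, hV, Matrix.one_mul]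

lemma trace_mul_transpose [Fintype ι] [Fintype κ] [DecidableEq κ] {V : Matrix ι κ ℝ}
    (hV : Vᵀ * V = 1) : trace (V * Vᵀ) = Fintype.card κ := by
  rw [trace_mul_comm, hV, trace_one]

lemma transpose_mul_submatrix_embedding [Fintype ι] [DecidableEq ι] [DecidableEq κ]
    {U : Matrix ι ι ℝ} (hU : Uᵀ * U = 1) (e : κ ↪ ι) :
    (U.submatrix id e)ᵀ * U.submatrix id e = 1 := by
  rw [transpose_submatrix, ← submatrix_mul _ _ _ _ _ Function.bijective_id, hU,
    submatrix_one_embedding]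

noncomputable def columnProjection [Fintype ι] [DecidableEq ι] (U : Matrix ι ι ℝ)
    (S : Finset ι) : Matrix ι ι ℝ :=
  U * diagonal (fun i => if i ∈ S then 1 else 0) * Uᵀ

lemma submatrix_mul_transpose_submatrix_embedding [Fintype ι] [Fintype κ] [DecidableEq ι]
    (U : Matrix ι ι ℝ) (e : κ ↪ ι) :
    U.submatrix id e * (U.submatrix id e)ᵀ = columnProjection U (univ.map e) := by
  ext a b
  rw [columnProjection, mul_apply, mul_apply]
  simp only [mul_diagonal, transpose_apply, submatrix_apply, id, mul_ite, mul_one,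
    mul_zero, ite_mul, zero_mul, sum_ite_mem, univ_inter, sum_map]

lemma trace_conj_diagonal_mul [Fintype ι] [DecidableEq ι] (U Q : Matrix ι ι ℝ) (d : ι → ℝ) :
    trace (U * diagonal d * Uᵀ * Q) = ∑ i, d i * (Uᵀ * Q * U) i i := by
  rw [Matrix.mul_assoc, Matrix.mul_assoc, trace_mul_comm, Matrix.mul_assoc, Matrix.mul_assoc]
  simp only [trace, diag_apply, diagonal_mul]

lemma transpose_mul_conj_diagonal_mul [Fintype ι] [DecidableEq ι] {U : Matrix ι ι ℝ}
    (hU : Uᵀ * U = 1) (d : ι → ℝ) : Uᵀ * (U * diagonal d * Uᵀ) * U = diagonal d := by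
  simp only [← Matrix.mul_assoc, hU, Matrix.one_mul]
  rw [Matrix.mul_assoc, hU, Matrix.mul_one]

end Projections

lemma sub_mul_card_sub_sum_le {ι : Type*} [Fintype ι] [DecidableEq ι] {S : Finset ι}
    {lam w : ι → ℝ} {a b : ℝ} (ha : ∀ i ∈ S, a ≤ lam i) (hb : ∀ i ∉ S, lam i ≤ b)
    (hw0 : ∀ i, 0 ≤ w i) (hw1 : ∀ i, w i ≤ 1) (hw : ∑ i, w i = #S) :
    (a - b) * (#S - ∑ i ∈ S, w i) ≤ ∑ i ∈ S, lam i - ∑ i, lam i * w i := by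
  have hdefect : (#S : ℝ) - ∑ i ∈ S, w i = ∑ i ∈ S, (1 - w i) := by
    simp [sum_sub_distrib]
  have hcompl : ∑ i ∈ Sᶜ, w i = #S - ∑ i ∈ S, w i := by
    rw [← hw, ← sum_add_sum_compl S w]; ring
  have hin : a * (#S - ∑ i ∈ S, w i) ≤ ∑ i ∈ S, lam i * (1 - w i) := by
    rw [hdefect, mul_sum]
    exact sum_le_sum fun i hi => mul_le_mul_of_nonneg_right (ha i hi) (by linarith [hw1 i])
  have hout : ∑ i ∈ Sᶜ, lam i * w i ≤ b * (#S - ∑ i ∈ S, w i) := by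
    rw [← hcompl, mul_sum]
    exact sum_le_sum fun i hi => mul_le_mul_of_nonneg_right (hb i (mem_compl.1 hi)) (hw0 i)
  have hsplit : ∑ i, lam i * w i = ∑ i ∈ S, lam i * w i + ∑ i ∈ Sᶜ, lam i * w i :=
    (sum_add_sum_compl S _).symm
  have hexpand : ∑ i ∈ S, lam i * (1 - w i) = ∑ i ∈ S, lam i - ∑ i ∈ S, lam i * w i := by
    simp [mul_sub, sum_sub_distrib]
  linarith

lemma sub_mul_card_sub_trace_le_trace_mul_sub {ι : Type*} [Fintype ι] [DecidableEq ι]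
    {U Q : Matrix ι ι ℝ} (hU : Uᵀ * U = 1) (hQs : Q.IsSymm) (hQ : IsIdempotentElem Q)
    {S : Finset ι} (hQS : trace Q = #S) {lam : ι → ℝ} {a b : ℝ}
    (ha : ∀ i ∈ S, a ≤ lam i) (hb : ∀ i ∉ S, lam i ≤ b) :
    (a - b) * (#S - trace (columnProjection U S * Q))
      ≤ trace (U * diagonal lam * Uᵀ * (columnProjection U S - Q)) := by
  have hU' : U * Uᵀ = 1 := mul_eq_one_comm.mp hU
  have hw := diag_mem_Icc_of_isIdempotentElem (isSymm_transpose_mul_mul hQs U)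
    (isIdempotentElem_transpose_mul_mul hQ hU')
  have hwsum : ∑ i, (Uᵀ * Q * U) i i = #S := by
    change trace (Uᵀ * Q * U) = _
    rw [← hQS, ← trace_mul_cycle, Matrix.mul_assoc, hU', Matrix.mul_one]
  rw [columnProjection, Matrix.mul_sub, trace_sub, trace_conj_diagonal_mul,
    trace_conj_diagonal_mul, transpose_mul_conj_diagonal_mul hU, trace_conj_diagonal_mul]
  simp only [diagonal_apply_eq, mul_ite, mul_one, mul_zero, ite_mul, one_mul, zero_mul,
    sum_ite_mem, univ_inter]
  exact sub_mul_card_sub_sum_le ha hb (fun i => (hw i).1) (fun i => (hw i).2) hwsum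

section Frobenius

variable {m n : ℕ}

lemma trace_transpose_mul_self (A : Matrix (Fin m) (Fin n) ℝ) :
    trace (Aᵀ * A) = ∑ i, ∑ j, A i j ^ 2 := by
  simp only [trace, diag_apply, mul_apply, transpose_apply, sq]
  exact sum_comm

lemma frobNorm_sq (A : Matrix (Fin m) (Fin n) ℝ) : frobNorm A ^ 2 = trace (Aᵀ * A) :=
  Real.sq_sqrt <| trace_transpose_mul_self A ▸
    sum_nonneg fun _ _ => sum_nonneg fun _ _ => sq_nonneg _

lemma trace_mul_le_frobNorm_mul_frobNorm (A : Matrix (Fin m) (Fin n) ℝ)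
    (B : Matrix (Fin n) (Fin m) ℝ) : trace (A * B) ≤ frobNorm A * frobNorm B := by
  have h := Real.sum_mul_le_sqrt_mul_sqrt univ (fun p : Fin m × Fin n => A p.1 p.2)
    (fun p => B p.2 p.1)
  simp only [univ_product_univ.symm, sum_product] at h
  rw [frobNorm, frobNorm, trace_transpose_mul_self, trace_transpose_mul_self,
    sum_comm (γ := Fin n)]
  simpa only [trace, diag_apply, mul_apply] using h

lemma frobNorm_sub_sq_of_isIdempotentElem {P Q : Matrix (Fin m) (Fin m) ℝ} (hPs : P.IsSymm)
    (hQs : Q.IsSymm) (hP : IsIdempotentElem P) (hQ : IsIdempotentElem Q) :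
    frobNorm (P - Q) ^ 2 = trace P + trace Q - 2 * trace (P * Q) := by
  rw [frobNorm_sq, (hPs.sub hQs).eq, Matrix.sub_mul, Matrix.mul_sub, Matrix.mul_sub, hP.eq,
    hQ.eq, trace_sub, trace_sub, trace_sub, trace_mul_comm Q P]
  ring

lemma frobNorm_sub_le_of_variational {P Q K Khat : Matrix (Fin m) (Fin m) ℝ} (hPs : P.IsSymm)
    (hQs : Q.IsSymm) (hP : IsIdempotentElem P) (hQ : IsIdempotentElem Q) {r δ δhat : ℝ}
    (hPtr : trace P = r) (hQtr : trace Q = r) (hδ : 0 < δ) (hδhat : 0 ≤ δhat)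
    (hK : δ * (r - trace (P * Q)) ≤ trace (K * (P - Q)))
    (hKhat : δhat * (r - trace (Q * P)) ≤ trace (Khat * (Q - P))) :
    frobNorm (P - Q) ≤ 2 * frobNorm (K - Khat) / δ := by
  have hD : frobNorm (P - Q) ^ 2 = 2 * (r - trace (P * Q)) := by
    rw [frobNorm_sub_sq_of_isIdempotentElem hPs hQs hP hQ, hPtr, hQtr]
    ring
  have hoverlap : 0 ≤ r - trace (Q * P) := by
    rw [trace_mul_comm]
    nlinarith [sq_nonneg (frobNorm (P - Q))]
  have hcross : 0 ≤ -trace (Khat * (P - Q)) := by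
    rw [← trace_neg, ← Matrix.mul_neg, neg_sub]
    exact (mul_nonneg hδhat hoverlap).trans hKhat
  have hsq : δ * frobNorm (P - Q) ^ 2 ≤ 2 * frobNorm (K - Khat) * frobNorm (P - Q) := by
    have := trace_mul_le_frobNorm_mul_frobNorm (K - Khat) (P - Q)
    rw [Matrix.sub_mul, trace_sub] at this
    nlinarith
  have hnn : 0 ≤ frobNorm (P - Q) := Real.sqrt_nonneg _
  rw [le_div_iff₀ hδ]
  rcases hnn.eq_or_lt with h0 | hpos
  · rw [← h0, zero_mul]
    exact mul_nonneg zero_le_two (Real.sqrt_nonneg _)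
  · exact le_of_mul_le_mul_right (by nlinarith) hpos

end Frobenius

lemma eigengap_mul_le_trace_mul_sub {m r : ℕ} (hr : r < m) {U Q : Matrix (Fin m) (Fin m) ℝ}
    (hU : Uᵀ * U = 1) {lam : Fin m → ℝ} (hlam : Antitone lam) (hQs : Q.IsSymm)
    (hQ : IsIdempotentElem Q) (hQtr : trace Q = r) {V : Matrix (Fin m) (Fin r) ℝ}
    (hV : V = U.submatrix id (Fin.castLE hr.le)) :
    (lam ⟨r - 1, (Nat.sub_le r 1).trans_lt hr⟩ - lam ⟨r, hr⟩) * (r - trace (V * Vᵀ * Q))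
      ≤ trace (U * diagonal lam * Uᵀ * (V * Vᵀ - Q)) := by
  set S := univ.map (Fin.castLEEmb hr.le)
  have hS : #S = r := by simp [S]
  have ha : ∀ i ∈ S, lam ⟨r - 1, (Nat.sub_le r 1).trans_lt hr⟩ ≤ lam i := by
    intro i hi
    obtain ⟨j, -, rfl⟩ := mem_map.1 hi
    exact hlam (Fin.le_def.2 (Nat.le_sub_one_of_lt j.isLt))
  have hb : ∀ i ∉ S, lam i ≤ lam ⟨r, hr⟩ := fun i hi =>
    hlam (Fin.le_def.2 (not_lt.1 fun hir => hi (mem_map.2 ⟨⟨i, hir⟩, mem_univ _, rfl⟩)))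
  have key := sub_mul_card_sub_trace_le_trace_mul_sub hU hQs hQ (hS ▸ hQtr) ha hb
  rw [hS, ← submatrix_mul_transpose_submatrix_embedding] at key
  rwa [hV]

/-- Davis–Kahan sin(Θ) theorem (Yu–Wang–Samworth variant): with K, K̂
symmetric, eigenvalues λ₁ ≥ ⋯ ≥ λ_m of K, and V, V̂ the top-r orthonormal eigenvector
matrices of K and K̂, if λ_r > λ_{r+1} then
‖VVᵀ − V̂V̂ᵀ‖_F ≤ 2√2 ‖K − K̂‖_F / (λ_r − λ_{r+1}). -/
theorem stmt12 (m r : ℕ) (hr : r < m)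
    (K Khat : Matrix (Fin m) (Fin m) ℝ)
    (lam lamhat : Fin m → ℝ) (Vfull Vhatfull : Matrix (Fin m) (Fin m) ℝ)
    (hVorth : Vfullᵀ * Vfull = 1) (hVhatorth : Vhatfullᵀ * Vhatfull = 1)
    (hlamdec : ∀ i j : Fin m, i ≤ j → lam j ≤ lam i)
    (hlamhatdec : ∀ i j : Fin m, i ≤ j → lamhat j ≤ lamhat i)
    (hKdecomp : K = Vfull * Matrix.diagonal lam * Vfullᵀ)
    (hKhatdecomp : Khat = Vhatfull * Matrix.diagonal lamhat * Vhatfullᵀ)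
    (hgap : lam ⟨r, hr⟩ < lam ⟨r - 1, by omega⟩)
    (V Vhat : Matrix (Fin m) (Fin r) ℝ)
    (hV : V = Matrix.of fun i j => Vfull i (Fin.castLE hr.le j))
    (hVhat : Vhat = Matrix.of fun i j => Vhatfull i (Fin.castLE hr.le j)) :
    frobNorm (V * Vᵀ - Vhat * Vhatᵀ)
      ≤ 2 * Real.sqrt 2 * frobNorm (K - Khat)
          / (lam ⟨r - 1, by omega⟩ - lam ⟨r, hr⟩) := by
  have hVo : Vᵀ * V = 1 := hV ▸ transpose_mul_submatrix_embedding hVorth (Fin.castLEEmb hr.le)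
  have hVho : Vhatᵀ * Vhat = 1 :=
    hVhat ▸ transpose_mul_submatrix_embedding hVhatorth (Fin.castLEEmb hr.le)
  have hPtr : trace (V * Vᵀ) = r := by simpa using trace_mul_transpose hVo
  have hPhtr : trace (Vhat * Vhatᵀ) = r := by simpa using trace_mul_transpose hVho
  have hK := hKdecomp ▸ eigengap_mul_le_trace_mul_sub hr hVorth hlamdec
    (isSymm_mul_transpose Vhat) (isIdempotentElem_mul_transpose hVho) hPhtr hV
  have hKhat := hKhatdecomp ▸ eigengap_mul_le_trace_mul_sub hr hVhatorth hlamhatdec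
    (isSymm_mul_transpose V) (isIdempotentElem_mul_transpose hVo) hPtr hVhat
  have hgaphat : 0 ≤ lamhat ⟨r - 1, by omega⟩ - lamhat ⟨r, hr⟩ :=
    sub_nonneg.2 (hlamhatdec _ _ (Fin.le_def.2 (Nat.sub_le r 1)))
  calc frobNorm (V * Vᵀ - Vhat * Vhatᵀ)
      ≤ 2 * frobNorm (K - Khat) / (lam ⟨r - 1, by omega⟩ - lam ⟨r, hr⟩) :=
        frobNorm_sub_le_of_variational (isSymm_mul_transpose V) (isSymm_mul_transpose Vhat)
          (isIdempotentElem_mul_transpose hVo) (isIdempotentElem_mul_transpose hVho) hPtr hPhtr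
          (sub_pos.2 hgap) hgaphat hK hKhat
    _ ≤ 2 * Real.sqrt 2 * frobNorm (K - Khat) / (lam ⟨r - 1, by omega⟩ - lam ⟨r, hr⟩) := by
        gcongr
        · exact Real.sqrt_nonneg _
        · exact le_mul_of_one_le_right zero_le_two (Real.one_le_sqrt.2 one_le_two)
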